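/- arXiv:2509.10846 — 7 statements merged into one kernel-verified Lean document; each statement's English description precedes it below -/
import Mathlib

section
/- In any Tiles instance, every single move of a play preserves, for every feature f ∈ F, the parity of the number of positions i such that f belongs to the current set Uᵢ; consequently, for every f, the parity of #{i : f ∈ Uᵢ} in any reachable state equals the parity of #{i : f ∈ Tᵢ} in the initial state. -/
/-!
A Tiles instance: a finite set `F` of features (a type with decidable equality)
and tiles `T : Fin n → Finset F`.  A state is `U : Fin n → Finset F` with
`U i ⊆ T i`; the initial state is `T` itself.  A move from position `a` to
position `b` deletes the intersection `U a ∩ U b` from both tiles if it is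
nonempty (a standard move) and does nothing otherwise (a teleport move).
-/

/-- One move of the Tiles game, from position `a` to position `b`. -/
def TilesStep {n : ℕ} {F : Type} [DecidableEq F] (U : Fin n → Finset F) (a b : Fin n) :
    Fin n → Finset F :=
  if (U a ∩ U b).Nonempty then
    fun i => if i = a ∨ i = b then U i \ (U a ∩ U b) else U i
  else U

/-- The state after the first `t` moves of the play `p` (positions `p 0, p 1, …`),
starting from the initial state `T`. -/
def TilesState {n : ℕ} {F : Type} [DecidableEq F] (T : Fin n → Finset F) (p : ℕ → Fin n) :
    ℕ → (Fin n → Finset F)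
  | 0 => T
  | t + 1 => TilesStep (TilesState T p t) (p t) (p (t + 1))

/-- `p 0, p 1, …, p m` is a play: consecutive positions are distinct. -/
def TilesIsPlay {n : ℕ} (m : ℕ) (p : ℕ → Fin n) : Prop :=
  ∀ t < m, p t ≠ p (t + 1)

/-- The play `p 0, …, p m` solves the instance `T`: the final state is everywhere empty. -/
def TilesSolves {n : ℕ} {F : Type} [DecidableEq F] (T : Fin n → Finset F)
    (m : ℕ) (p : ℕ → Fin n) : Prop :=
  ∀ i, TilesState T p m i = ∅

/-- The play is a single unbroken combo: each teleport move happens only when the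
current set at the position the player is leaving is empty. -/
def TilesSingleCombo {n : ℕ} {F : Type} [DecidableEq F] (T : Fin n → Finset F)
    (m : ℕ) (p : ℕ → Fin n) : Prop :=
  ∀ t < m, ¬ (TilesState T p t (p t) ∩ TilesState T p t (p (t + 1))).Nonempty →
    TilesState T p t (p t) = ∅


lemma tiles_step_parity {n : ℕ} {F : Type} [DecidableEq F]
    (U : Fin n → Finset F) (a b : Fin n) (hab : a ≠ b) (f : F) :
    (Finset.univ.filter (fun i : Fin n => f ∈ TilesStep U a b i)).card % 2 =
    (Finset.univ.filter (fun i : Fin n => f ∈ U i)).card % 2 := by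
  unfold TilesStep
  split_ifs with h
  · by_cases hf : f ∈ U a ∩ U b
    · have hset : (Finset.univ.filter (fun i : Fin n =>
          f ∈ (fun i => if i = a ∨ i = b then U i \ (U a ∩ U b) else U i) i)) =
          (Finset.univ.filter (fun i : Fin n => f ∈ U i)) \ {a, b} := by
        ext i
        simp only [Finset.mem_filter, Finset.mem_univ, true_and, Finset.mem_sdiff,
          Finset.mem_insert, Finset.mem_singleton]
        by_cases hi : i = a ∨ i = b
        · rw [if_pos hi]
          constructor
          · intro h'
            exact absurd hf (Finset.mem_sdiff.mp h').2
          · rintro ⟨_, hni⟩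
            exact absurd hi hni
        · rw [if_neg hi]
          tauto
      rw [hset]
      have hsub : ({a, b} : Finset (Fin n)) ⊆ Finset.univ.filter (fun i => f ∈ U i) := by
        intro i hi
        simp only [Finset.mem_insert, Finset.mem_singleton] at hi
        simp only [Finset.mem_inter] at hf
        rcases hi with rfl | rfl <;> simp [hf.1, hf.2]
      have hcard : ({a, b} : Finset (Fin n)).card = 2 := by
        rw [Finset.card_insert_of_notMem (by simp [hab]), Finset.card_singleton]
      have hle : 2 ≤ (Finset.univ.filter (fun i => f ∈ U i)).card :=
        hcard ▸ Finset.card_le_card hsub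
      rw [Finset.card_sdiff_of_subset hsub, hcard]
      omega
    · have : (Finset.univ.filter (fun i : Fin n =>
          f ∈ (fun i => if i = a ∨ i = b then U i \ (U a ∩ U b) else U i) i)) =
          (Finset.univ.filter (fun i : Fin n => f ∈ U i)) := by
        apply Finset.filter_congr
        intro i _
        by_cases hi : i = a ∨ i = b <;> simp [hi, Finset.mem_sdiff, hf]
      rw [this]
  · rfl

/-- Every single move of a play preserves, for each feature `f`, the parity of the
number of positions whose current set contains `f`; consequently, in any state reachable
by a play, that parity equals the parity of the number of tiles initially containing `f`. -/
theorem tiles_move_preserves_parity {n : ℕ} {F : Type} [DecidableEq F]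
    (T : Fin n → Finset F) :
    (∀ (U : Fin n → Finset F) (a b : Fin n), a ≠ b → ∀ f : F,
      (Finset.univ.filter (fun i : Fin n => f ∈ TilesStep U a b i)).card % 2 =
        (Finset.univ.filter (fun i : Fin n => f ∈ U i)).card % 2) ∧
    (∀ (m : ℕ) (p : ℕ → Fin n), TilesIsPlay m p → ∀ t ≤ m, ∀ f : F,
      (Finset.univ.filter (fun i : Fin n => f ∈ TilesState T p t i)).card % 2 =
        (Finset.univ.filter (fun i : Fin n => f ∈ T i)).card % 2) := by
  refine ⟨fun U a b hab f => tiles_step_parity U a b hab f, ?_⟩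
  intro m p hp t ht f
  induction t with
  | zero => rfl
  | succ t ih =>
    have ht' : t ≤ m := Nat.le_of_succ_le ht
    rw [show TilesState T p (t+1) = TilesStep (TilesState T p t) (p t) (p (t+1)) from rfl,
      tiles_step_parity _ _ _ (hp t ht) f]
    exact ih ht'
end

section
/- If some feature f ∈ F of a Tiles instance belongs to an odd number of the tiles T₁, …, Tₙ, then the instance is not solvable: no play ends in the state where every Uᵢ = ∅. -/
lemma step_parity {n : ℕ} {F : Type} [DecidableEq F] (U : Fin n → Finset F) (a b : Fin n)
    (hab : a ≠ b) (f : F)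
    (h : Odd (Finset.univ.filter (fun i : Fin n => f ∈ U i)).card) :
    Odd (Finset.univ.filter (fun i : Fin n => f ∈ TilesStep U a b i)).card := by
  unfold TilesStep
  by_cases hne : (U a ∩ U b).Nonempty
  · simp only [if_pos hne]
    by_cases hf : f ∈ U a ∩ U b
    · have hfa : f ∈ U a := (Finset.mem_inter.1 hf).1
      have hfb : f ∈ U b := (Finset.mem_inter.1 hf).2
      have hset : (Finset.univ.filter (fun i : Fin n =>
          f ∈ if i = a ∨ i = b then U i \ (U a ∩ U b) else U i))
          = (Finset.univ.filter (fun i : Fin n => f ∈ U i)) \ {a, b} := by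
        ext i
        simp only [Finset.mem_filter, Finset.mem_univ, true_and, Finset.mem_sdiff,
          Finset.mem_insert, Finset.mem_singleton]
        by_cases hi : i = a ∨ i = b
        · simp [hi, hf, Finset.mem_sdiff]
        · simp [hi]
      rw [hset]
      have hsub : ({a, b} : Finset (Fin n)) ⊆ Finset.univ.filter (fun i : Fin n => f ∈ U i) := by
        intro i hi
        simp only [Finset.mem_insert, Finset.mem_singleton] at hi
        rcases hi with rfl | rfl <;> simp [hfa, hfb]
      rw [Finset.card_sdiff_of_subset hsub]
      have hcard2 : ({a, b} : Finset (Fin n)).card = 2 := by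
        rw [Finset.card_insert_of_notMem (by simpa using hab), Finset.card_singleton]
      rw [hcard2]
      obtain ⟨k, hk⟩ := h
      have hge : 2 ≤ (Finset.univ.filter (fun i : Fin n => f ∈ U i)).card := by
        calc 2 = ({a, b} : Finset (Fin n)).card := hcard2.symm
        _ ≤ _ := Finset.card_le_card hsub
      refine ⟨k - 1, ?_⟩
      omega
    · have hset : (Finset.univ.filter (fun i : Fin n =>
          f ∈ if i = a ∨ i = b then U i \ (U a ∩ U b) else U i))
          = Finset.univ.filter (fun i : Fin n => f ∈ U i) := by
        ext i
        simp only [Finset.mem_filter, Finset.mem_univ, true_and]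
        by_cases hi : i = a ∨ i = b
        · simp [hi, Finset.mem_sdiff, hf]
        · simp [hi]
      rw [hset]; exact h
  · simp only [if_neg hne]; exact h

/-- If some feature belongs to an odd number of the tiles, then the instance is not
solvable: no play ends with every current set empty. -/
theorem tiles_odd_feature_unsolvable {n : ℕ} {F : Type} [DecidableEq F]
    (T : Fin n → Finset F) (f : F)
    (hodd : Odd (Finset.univ.filter (fun i : Fin n => f ∈ T i)).card) :
    ¬ ∃ m p, TilesIsPlay m p ∧ TilesSolves T m p := by
  rintro ⟨m, p, hplay, hsolve⟩
  have key : ∀ t ≤ m, Odd (Finset.univ.filter (fun i : Fin n => f ∈ TilesState T p t i)).card := by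
    intro t
    induction t with
    | zero => intro _; exact hodd
    | succ t ih =>
      intro ht
      have ht' : t < m := Nat.lt_of_succ_le ht
      have := ih (le_of_lt ht')
      show Odd (Finset.univ.filter (fun i : Fin n =>
        f ∈ TilesStep (TilesState T p t) (p t) (p (t + 1)) i)).card
      exact step_parity _ _ _ (hplay t ht') f this
  have h := key m le_rfl
  have : (Finset.univ.filter (fun i : Fin n => f ∈ TilesState T p m i)) = ∅ := by
    apply Finset.filter_false_of_mem
    intro i _
    rw [hsolve i]
    exact Finset.notMem_empty f
  rw [this] at h
  simp at h
end

section
/- A Tiles instance with sharing number at most 1 is solvable by a play consisting solely of standard moves (no teleport moves) if and only if its structure graph admits an Eulerian trail whose two endpoints (possibly equal) are both tile vertices. -/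
/-- Every move of the play is standard (no teleport moves): at each step the current
sets at the two involved positions intersect. -/
def TilesAllStandard {n : ℕ} {F : Type} [DecidableEq F] (T : Fin n → Finset F)
    (m : ℕ) (p : ℕ → Fin n) : Prop :=
  ∀ t < m, (TilesState T p t (p t) ∩ TilesState T p t (p (t + 1))).Nonempty

/-- The structure graph of a Tiles instance: the bipartite graph on tile positions and
features, with an edge between tile position `i` and feature `f` iff `f ∈ T i`. -/
def structureGraph {n : ℕ} {F : Type} [DecidableEq F] (T : Fin n → Finset F) :
    SimpleGraph (Fin n ⊕ F) :=
  SimpleGraph.fromRel (fun x y => ∃ (i : Fin n) (f : F), x = Sum.inl i ∧ y = Sum.inr f ∧ f ∈ T i)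

/-!
With sharing number at most 1, a standard move between tiles `a` and `b` removes their unique
common feature `f` from both, i.e. it deletes exactly the two edges `a - f - b` of the structure
graph. Hence a standard play `p₀, …, pₘ` traces the trail `p₀ f₁ p₁ ⋯ fₘ pₘ`, and it solves the
instance iff this trail leaves no edge behind. Conversely, an Eulerian trail between tile
vertices alternates tiles and features and is read back, two edges at a time, as a play.
-/

open SimpleGraph Sum

namespace SimpleGraph.Walk

variable {V : Type*} [DecidableEq V] {G : SimpleGraph V}

theorem isEulerian_nil_iff {u : V} : (nil : G.Walk u u).IsEulerian ↔ G = ⊥ := by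
  simp [IsEulerian, ← edgeSet_eq_empty, Set.eq_empty_iff_forall_notMem]

theorem isEulerian_cons_cons_mapLe_iff {x y z w : V} (h₁ : G.Adj x y) (h₂ : G.Adj y z)
    (hne : s(x, y) ≠ s(y, z)) (r : (G.deleteEdges {s(x, y), s(y, z)}).Walk z w) :
    (cons h₁ (cons h₂ (r.mapLe (G.deleteEdges_le _)))).IsEulerian ↔ r.IsEulerian := by
  have hr : s(x, y) ∉ r.edges ∧ s(y, z) ∉ r.edges := by
    constructor <;> intro he <;> simpa using (r.edges_subset_edgeSet he)
  unfold IsEulerian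
  rw [edges_cons, edges_cons, edges_mapLe_eq_edges, edgeSet_deleteEdges]
  refine ⟨fun h e he => ?_, fun h e he => ?_⟩
  · simp only [Set.mem_sdiff, Set.mem_insert_iff, Set.mem_singleton_iff, not_or] at he
    have := h e he.1
    rwa [List.count_cons_of_ne (Ne.symm he.2.1), List.count_cons_of_ne (Ne.symm he.2.2)] at this
  · by_cases hx : e = s(x, y)
    · rw [hx, List.count_cons_self, List.count_cons_of_ne hne.symm, List.count_eq_zero.2 hr.1]
    by_cases hy : e = s(y, z)
    · rw [hy, List.count_cons_of_ne hne, List.count_cons_self, List.count_eq_zero.2 hr.2]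
    rw [List.count_cons_of_ne (Ne.symm hx), List.count_cons_of_ne (Ne.symm hy)]
    exact h e ⟨he, by simp [hx, hy]⟩

end SimpleGraph.Walk

section Tiles

variable {n : ℕ} {F : Type} [DecidableEq F]

def HasSharingAtMostOne (T : Fin n → Finset F) : Prop :=
  ∀ i j : Fin n, i ≠ j → (T i ∩ T j).card ≤ 1

theorem HasSharingAtMostOne.inter_eq_singleton {T : Fin n → Finset F}
    (hT : HasSharingAtMostOne T) {a b : Fin n} (hab : a ≠ b) {f : F} (hf : f ∈ T a ∩ T b) :
    T a ∩ T b = {f} :=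
  Finset.eq_singleton_iff_unique_mem.2
    ⟨hf, fun _ hg => Finset.card_le_one.1 (hT a b hab) _ hg _ hf⟩

theorem tilesStep_subset (U : Fin n → Finset F) (a b i : Fin n) : TilesStep U a b i ⊆ U i := by
  unfold TilesStep
  split_ifs
  · dsimp only
    split_ifs <;> simp
  · rfl

theorem HasSharingAtMostOne.tilesStep {T : Fin n → Finset F} (hT : HasSharingAtMostOne T)
    (a b : Fin n) : HasSharingAtMostOne (TilesStep T a b) := fun i j hij =>
  (Finset.card_le_card (Finset.inter_subset_inter (tilesStep_subset T a b i)
    (tilesStep_subset T a b j))).trans (hT i j hij)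

theorem mem_tilesStep_of_inter_eq_singleton {T : Fin n → Finset F} {a b : Fin n} {f : F}
    (h : T a ∩ T b = {f}) {i : Fin n} {g : F} :
    g ∈ TilesStep T a b i ↔ g ∈ T i ∧ ¬(g = f ∧ (i = a ∨ i = b)) := by
  simp only [TilesStep, h, Finset.singleton_nonempty, if_true]
  split_ifs with hi <;> simp [hi]

section structureGraph

variable (T : Fin n → Finset F) (i j : Fin n) (f g : F)

@[simp]
theorem structureGraph_adj_inl_inr : (structureGraph T).Adj (inl i) (inr f) ↔ f ∈ T i := by
  simp [structureGraph]

@[simp]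
theorem structureGraph_adj_inr_inl : (structureGraph T).Adj (inr f) (inl i) ↔ f ∈ T i := by
  simp [structureGraph]

@[simp]
theorem not_structureGraph_adj_inl_inl : ¬(structureGraph T).Adj (inl i) (inl j) := by
  simp [structureGraph]

@[simp]
theorem not_structureGraph_adj_inr_inr : ¬(structureGraph T).Adj (inr f) (inr g) := by
  simp [structureGraph]

end structureGraph

theorem structureGraph_eq_bot_iff {T : Fin n → Finset F} :
    structureGraph T = ⊥ ↔ ∀ i, T i = ∅ := by
  simp only [eq_bot_iff_forall_not_adj, Sum.forall, not_structureGraph_adj_inl_inl,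
    not_structureGraph_adj_inr_inr, structureGraph_adj_inl_inr, structureGraph_adj_inr_inl,
    not_false_eq_true, implies_true, true_and, and_true, Finset.eq_empty_iff_forall_notMem,
    and_iff_left_iff_imp]
  exact fun h f i => h i f

theorem structureGraph_tilesStep {T : Fin n → Finset F} {a b : Fin n} {f : F}
    (h : T a ∩ T b = {f}) :
    structureGraph (TilesStep T a b) =
      (structureGraph T).deleteEdges {s(inl a, inr f), s(inr f, inl b)} := by
  ext (i | g) (j | g') <;> simp [mem_tilesStep_of_inter_eq_singleton h] <;> tauto

def IsStandardSolution (T : Fin n → Finset F) (m : ℕ) (p : ℕ → Fin n) : Prop :=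
  TilesIsPlay m p ∧ TilesAllStandard T m p ∧ TilesSolves T m p

theorem tilesState_succ (T : Fin n → Finset F) (p : ℕ → Fin n) (t : ℕ) :
    TilesState T p (t + 1) = TilesState (TilesStep T (p 0) (p 1)) (fun s => p (s + 1)) t := by
  induction t with
  | zero => rfl
  | succ t ih => rw [TilesState, ih]; rfl

theorem isStandardSolution_zero_iff {T : Fin n → Finset F} {p : ℕ → Fin n} :
    IsStandardSolution T 0 p ↔ ∀ i, T i = ∅ := by
  simp [IsStandardSolution, TilesIsPlay, TilesAllStandard, TilesSolves, TilesState]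

theorem isStandardSolution_succ_iff {T : Fin n → Finset F} {m : ℕ} {p : ℕ → Fin n} :
    IsStandardSolution T (m + 1) p ↔ p 0 ≠ p 1 ∧ (T (p 0) ∩ T (p 1)).Nonempty ∧
      IsStandardSolution (TilesStep T (p 0) (p 1)) m (fun s => p (s + 1)) := by
  simp only [IsStandardSolution, TilesIsPlay, TilesAllStandard, TilesSolves,
    Nat.forall_lt_succ_left, tilesState_succ]
  exact ⟨fun ⟨⟨h₁, h₂⟩, ⟨h₃, h₄⟩, h₅⟩ => ⟨h₁, h₃, h₂, h₄, h₅⟩,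
    fun ⟨h₁, h₃, h₂, h₄, h₅⟩ => ⟨⟨h₁, h₂⟩, ⟨h₃, h₄⟩, h₅⟩⟩

theorem HasSharingAtMostOne.exists_isEulerian {T : Fin n → Finset F}
    (hT : HasSharingAtMostOne T) {m : ℕ} {p : ℕ → Fin n} (h : IsStandardSolution T m p) :
    ∃ w : (structureGraph T).Walk (inl (p 0)) (inl (p m)), w.IsEulerian := by
  induction m generalizing T p with
  | zero =>
    rw [isStandardSolution_zero_iff, ← structureGraph_eq_bot_iff] at h
    exact ⟨.nil, Walk.isEulerian_nil_iff.2 h⟩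
  | succ m ih =>
    obtain ⟨hne, ⟨f, hf⟩, h⟩ := isStandardSolution_succ_iff.1 h
    have hsingle := hT.inter_eq_singleton hne hf
    have := ih (hT.tilesStep _ _) h
    rw [structureGraph_tilesStep hsingle] at this
    obtain ⟨r, hr⟩ := this
    rw [Finset.mem_inter] at hf
    refine ⟨.cons ((structureGraph_adj_inl_inr ..).2 hf.1)
      (.cons ((structureGraph_adj_inr_inl ..).2 hf.2) (r.mapLe (deleteEdges_le _))), ?_⟩
    exact (Walk.isEulerian_cons_cons_mapLe_iff _ _ (by simpa using hne) r).2 hr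

theorem HasSharingAtMostOne.exists_isStandardSolution {T : Fin n → Finset F}
    (hT : HasSharingAtMostOne T) {a b : Fin n} (w : (structureGraph T).Walk (inl a) (inl b))
    (hw : w.IsEulerian) : ∃ m p, p 0 = a ∧ IsStandardSolution T m p := by
  match w, hw with
  | .nil, hw => exact ⟨0, fun _ => a, rfl, isStandardSolution_zero_iff.2 <|
      structureGraph_eq_bot_iff.1 <| Walk.isEulerian_nil_iff.1 hw⟩
  | .cons (v := inl _) h₁ _, _ => exact (not_structureGraph_adj_inl_inl _ _ _ h₁).elim
  | .cons (v := inr f) h₁ (.cons (v := inr _) h₂ _), _ =>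
      exact (not_structureGraph_adj_inr_inr _ _ _ h₂).elim
  | .cons (v := inr f) h₁ (.cons (v := inl c) h₂ w₂), hw =>
    have hf : f ∈ T a ∩ T c := Finset.mem_inter.2 ⟨(structureGraph_adj_inl_inr ..).1 h₁,
      (structureGraph_adj_inr_inl ..).1 h₂⟩
    have htrail := hw.isTrail
    rw [Walk.isTrail_cons, Walk.isTrail_cons, Walk.edges_cons, List.mem_cons, not_or] at htrail
    have hac : a ≠ c := by
      rintro rfl
      exact htrail.2.1 Sym2.eq_swap
    -- `hr_len` makes the recursive call below decrease `w.length`.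
    obtain ⟨r, hr_len, hr⟩ : ∃ r : (structureGraph (TilesStep T a c)).Walk (inl c) (inl b),
        r.length = w₂.length ∧ r.IsEulerian := by
      rw [structureGraph_tilesStep (hT.inter_eq_singleton hac hf)]
      refine ⟨w₂.toDeleteEdges _ fun e he => ?_, by simp, ?_⟩
      · rintro (rfl | rfl : e = _ ∨ e = _)
        exacts [htrail.2.2 he, htrail.1.2 he]
      · rw [← Walk.isEulerian_cons_cons_mapLe_iff h₁ h₂ htrail.2.1, Walk.mapLe,
          Walk.map_toDeleteEdges_eq]
        exact hw
    obtain ⟨m, p, hp, hsol⟩ := (hT.tilesStep a c).exists_isStandardSolution r hr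
    refine ⟨m + 1, fun | 0 => a | t + 1 => p t, rfl, ?_⟩
    subst hp
    exact isStandardSolution_succ_iff.2 ⟨hac, ⟨f, hf⟩, hsol⟩
termination_by w.length

end Tiles

/-- A Tiles instance with sharing number at most 1 is solvable by a play consisting
solely of standard moves iff its structure graph has an Eulerian trail whose endpoints
are both tile vertices. -/
theorem tiles_no_teleport_iff_eulerian {n : ℕ} {F : Type} [DecidableEq F]
    (T : Fin n → Finset F)
    (hshare : ∀ i j : Fin n, i ≠ j → (T i ∩ T j).card ≤ 1) :
    (∃ m p, TilesIsPlay m p ∧ TilesAllStandard T m p ∧ TilesSolves T m p) ↔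
    (∃ (a b : Fin n) (w : (structureGraph T).Walk (Sum.inl a) (Sum.inl b)), w.IsEulerian) := by
  have hT : HasSharingAtMostOne T := hshare
  constructor
  · rintro ⟨m, p, hsol⟩
    exact ⟨p 0, p m, hT.exists_isEulerian hsol⟩
  · rintro ⟨a, b, w, hw⟩
    obtain ⟨m, p, -, hsol⟩ := hT.exists_isStandardSolution w hw
    exact ⟨m, p, hsol⟩
end

section
/- For a Tiles instance with sharing number at most 1, the map that sends each trail i₀, f₁, i₁, f₂, …, fₖ₋₁, iₖ₋₁ of the structure graph starting and ending at tile vertices to its subsequence of tile vertices (i₀, i₁, …, iₖ₋₁) is injective. -/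
open SimpleGraph Sum

namespace SimpleGraph.Walk

variable {V α β : Type*}

theorem IsTrail.ne_of_cons_cons {G : SimpleGraph V} {u x y v : V} {h : G.Adj u x}
    {h' : G.Adj x y} {p : G.Walk y v} (ht : (cons h (cons h' p)).IsTrail) : u ≠ y := by
  rintro rfl
  simp [Sym2.eq_swap] at ht

variable {G : SimpleGraph (α ⊕ β)}

abbrev leftSupport {u v : α ⊕ β} (w : G.Walk u v) : List α :=
  w.support.filterMap Sum.getLeft?

theorem leftSupport_nil {u : α ⊕ β} : (nil : G.Walk u u).leftSupport = u.getLeft?.toList := by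
  cases u <;> rfl

theorem leftSupport_cons {u x v : α ⊕ β} (h : G.Adj u x) (p : G.Walk x v) :
    (cons h p).leftSupport = u.getLeft?.toList ++ p.leftSupport := by
  cases u <;> rfl

theorem mem_leftSupport_of_end {u : α ⊕ β} {b : α} (w : G.Walk u (inl b)) :
    b ∈ w.leftSupport :=
  List.mem_filterMap.2 ⟨inl b, w.end_mem_support, rfl⟩

theorem eq_of_leftSupport_eq {a b : α} {v v' : α ⊕ β} {p : G.Walk (inl a) v}
    {q : G.Walk (inl b) v'} (h : p.leftSupport = q.leftSupport) : a = b := by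
  rw [leftSupport, leftSupport, ← p.cons_tail_support, ← q.cons_tail_support] at h
  simp only [List.filterMap_cons, getLeft?_inl, List.cons.injEq] at h
  exact h.1

theorem leftSupport_cons_ne_nil {u x v : α ⊕ β} (h : G.Adj u x) (p : G.Walk x v)
    (hv : v.isLeft) : (cons h p).leftSupport ≠ (nil : G.Walk u u).leftSupport := by
  obtain ⟨b, rfl⟩ := isLeft_iff.1 hv
  intro heq
  have := congrArg List.length heq
  simp only [leftSupport_cons, leftSupport_nil, List.length_append] at this
  exact List.ne_nil_of_mem p.mem_leftSupport_of_end (List.eq_nil_of_length_eq_zero (by omega))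

end SimpleGraph.Walk

namespace structureGraph

variable {n : ℕ} {F : Type} [DecidableEq F] {T : Fin n → Finset F}

theorem exists_eq_inr_of_adj_inl {i : Fin n} {x : Fin n ⊕ F}
    (h : (structureGraph T).Adj (inl i) x) : ∃ f ∈ T i, x = inr f := by
  rcases x with j | f <;> simp_all [structureGraph]

theorem exists_eq_inl_of_adj_inr {f : F} {x : Fin n ⊕ F}
    (h : (structureGraph T).Adj (inr f) x) : ∃ j, f ∈ T j ∧ x = inl j := by
  rcases x with j | g <;> simp_all [structureGraph]

theorem exists_eq_cons_of_walk_inr {f : F} {v : Fin n ⊕ F} (p : (structureGraph T).Walk (inr f) v)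
    (hv : v.isLeft) : ∃ (j : Fin n) (_ : f ∈ T j) (h : (structureGraph T).Adj (inr f) (inl j))
      (q : (structureGraph T).Walk (inl j) v), p = .cons h q := by
  cases p with
  | nil => simp at hv
  | cons h q =>
    obtain ⟨j, hj, rfl⟩ := exists_eq_inl_of_adj_inr h
    exact ⟨j, hj, h, q, rfl⟩

theorem snd_eq_of_leftSupport_eq (hshare : ∀ i j : Fin n, i ≠ j → (T i ∩ T j).card ≤ 1)
    {u x y v₁ v₂ : Fin n ⊕ F} (h₁ : (structureGraph T).Adj u x)
    (p₁ : (structureGraph T).Walk x v₁) (h₂ : (structureGraph T).Adj u y) (p₂ : (structureGraph T).Walk y v₂)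
    (hv₁ : v₁.isLeft) (hv₂ : v₂.isLeft) (ht : (Walk.cons h₁ p₁).IsTrail)
    (h : p₁.leftSupport = p₂.leftSupport) : x = y := by
  rcases u with i | f
  · obtain ⟨f₁, hf₁, rfl⟩ := exists_eq_inr_of_adj_inl h₁
    obtain ⟨f₂, hf₂, rfl⟩ := exists_eq_inr_of_adj_inl h₂
    obtain ⟨j, hf₁', h₁', q₁, rfl⟩ := exists_eq_cons_of_walk_inr p₁ hv₁
    obtain ⟨j₂, hf₂', h₂', q₂, rfl⟩ := exists_eq_cons_of_walk_inr p₂ hv₂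
    rw [Walk.leftSupport_cons, Walk.leftSupport_cons] at h
    obtain rfl : j = j₂ := Walk.eq_of_leftSupport_eq (List.append_cancel_left h)
    have hij : i ≠ j := by simpa using ht.ne_of_cons_cons
    rw [Finset.card_le_one.1 (hshare i j hij) f₁ (Finset.mem_inter.2 ⟨hf₁, hf₁'⟩) f₂
      (Finset.mem_inter.2 ⟨hf₂, hf₂'⟩)]
  · obtain ⟨j₁, -, rfl⟩ := exists_eq_inl_of_adj_inr h₁
    obtain ⟨j₂, -, rfl⟩ := exists_eq_inl_of_adj_inr h₂
    rw [Walk.eq_of_leftSupport_eq h]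

theorem heq_of_isTrail_of_leftSupport_eq
    (hshare : ∀ i j : Fin n, i ≠ j → (T i ∩ T j).card ≤ 1) {u v₁ v₂ : Fin n ⊕ F}
    (w₁ : (structureGraph T).Walk u v₁) (w₂ : (structureGraph T).Walk u v₂)
    (hv₁ : v₁.isLeft) (hv₂ : v₂.isLeft) (ht : w₁.IsTrail)
    (h : w₁.leftSupport = w₂.leftSupport) : v₁ = v₂ ∧ HEq w₁ w₂ := by
  induction w₁ with
  | nil =>
    cases w₂ with
    | nil => exact ⟨rfl, .rfl⟩
    | cons h₂ p₂ => exact absurd h.symm (Walk.leftSupport_cons_ne_nil h₂ p₂ hv₂)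
  | cons h₁ p₁ ih =>
    cases w₂ with
    | nil => exact absurd h (Walk.leftSupport_cons_ne_nil h₁ p₁ hv₁)
    | cons h₂ p₂ =>
      rw [Walk.leftSupport_cons, Walk.leftSupport_cons] at h
      replace h := List.append_cancel_left h
      obtain rfl := snd_eq_of_leftSupport_eq hshare h₁ p₁ h₂ p₂ hv₁ hv₂ ht h
      obtain ⟨rfl, hp⟩ := ih p₂ hv₁ ht.of_cons h
      exact ⟨rfl, heq_of_eq (congrArg _ (eq_of_heq hp))⟩

end structureGraph

theorem tiles_trail_determined_by_tile_vertices_general {n : ℕ} {F : Type} [DecidableEq F]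
    (T : Fin n → Finset F)
    (hshare : ∀ i j : Fin n, i ≠ j → (T i ∩ T j).card ≤ 1)
    (a₁ b₁ a₂ b₂ : Fin n)
    (w₁ : (structureGraph T).Walk (Sum.inl a₁) (Sum.inl b₁))
    (w₂ : (structureGraph T).Walk (Sum.inl a₂) (Sum.inl b₂))
    (h₁ : w₁.IsTrail)
    (hsupp : w₁.support.filterMap Sum.getLeft? = w₂.support.filterMap Sum.getLeft?) :
    a₁ = a₂ ∧ b₁ = b₂ ∧ HEq w₁ w₂ := by
  obtain rfl : a₁ = a₂ := Walk.eq_of_leftSupport_eq hsupp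
  obtain ⟨hb, hw⟩ :=
    structureGraph.heq_of_isTrail_of_leftSupport_eq hshare w₁ w₂ rfl rfl h₁ hsupp
  exact ⟨rfl, inl_injective hb, hw⟩

/-- For a Tiles instance with sharing number at most 1, the map sending a trail of the
structure graph that starts and ends at tile vertices to the subsequence of tile vertices
appearing along it is injective. -/
theorem tiles_trail_determined_by_tile_vertices {n : ℕ} {F : Type} [DecidableEq F]
    (T : Fin n → Finset F)
    (hshare : ∀ i j : Fin n, i ≠ j → (T i ∩ T j).card ≤ 1)
    (a₁ b₁ a₂ b₂ : Fin n)
    (w₁ : (structureGraph T).Walk (Sum.inl a₁) (Sum.inl b₁))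
    (w₂ : (structureGraph T).Walk (Sum.inl a₂) (Sum.inl b₂))
    (h₁ : w₁.IsTrail) (h₂ : w₂.IsTrail)
    (hsupp : w₁.support.filterMap Sum.getLeft? = w₂.support.filterMap Sum.getLeft?) :
    a₁ = a₂ ∧ b₁ = b₂ ∧ HEq w₁ w₂ :=
  tiles_trail_determined_by_tile_vertices_general T hshare a₁ b₁ a₂ b₂ w₁ w₂ h₁ hsupp
end

section
/- If an S-sides Letter Boxed puzzle (Σ, D, Γ₁, …, Γ_S) in which every multiset Γᵢ has size n admits a solution, then it admits a solution of length at most S²·|Σ|·n. -/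
/-!
Letter Boxed with `S` sides: alphabet a type `A`, dictionary `D : Finset (List A)`
(of nonempty words), sides `Γ : Fin S → Multiset A`.

A solution is a list of words `ws` (each in `D`, consecutive words linked
last-letter-to-first-letter) together with a side assignment `sides : ℕ → Fin S`
for the positions of the concatenation `σ = ws.flatten`, such that consecutive positions
lie on different sides (except across word boundaries, where the side is repeated),
every position lies on its assigned side, and every character of every side is covered
the required number of times.
-/

/-- Position `j` (0-based) of the concatenation of `ws` is the last character of one
of the words of `ws`. -/
def WordEnd {A : Type} (ws : List (List A)) (j : ℕ) : Prop :=
  ∃ t < ws.length, j + 1 = ((ws.take (t + 1)).map List.length).sum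

/-- `(ws, sides)` is a solution of the Letter Boxed puzzle with dictionary `D` and
sides `Γ`.  The four conditions are the linking condition between consecutive words,
the alternation condition on sides, the membership condition, and the covering
condition. -/
def IsLBSolution {S : ℕ} {A : Type} [DecidableEq A]
    (D : Finset (List A)) (Γ : Fin S → Multiset A)
    (ws : List (List A)) (sides : ℕ → Fin S) : Prop :=
  (∀ w ∈ ws, w ∈ D) ∧
  (∀ i : ℕ, i + 1 < ws.length → (ws.getD i []).getLast? = (ws.getD (i + 1) []).head?) ∧
  (∀ j : ℕ, j + 1 < ws.flatten.length →
    ((WordEnd ws j → sides j = sides (j + 1)) ∧ (¬ WordEnd ws j → sides j ≠ sides (j + 1)))) ∧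
  (∀ (j : ℕ) (h : j < ws.flatten.length), ws.flatten.get ⟨j, h⟩ ∈ Γ (sides j)) ∧
  (∀ (i : Fin S) (γ : A),
    (Γ i).count γ ≤
      {j : ℕ | ∃ h : j < ws.flatten.length, ws.flatten.get ⟨j, h⟩ = γ ∧ sides j = i ∧
        (j + 1 = ws.flatten.length ∨ ¬ WordEnd ws j)}.ncard)

/-!
Fix, for every side `i` and letter `γ`, `(Γ i).count γ` of the positions that cover `γ` on
side `i`; together they form a set `K` of at most `S * n` positions. A block of consecutive
words containing no position of `K` can be cut out of a solution, provided the word following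
the block starts with the same letter, on the same side, as the first word of the block (or
nothing follows the block): the remaining positions keep their sides. If a solution has more
than `S² · |Σ| · n` words, either its last word avoids `K`, or every word start is followed by
a position of `K`, and by pigeonhole two word starts agree in their first letter, its side and
the number of positions of `K` after them; the words in between form a removable block.
-/

def shiftFrom (k m j : ℕ) : ℕ := if j < k then j else j + m

section shiftFrom

variable {k m j : ℕ}

lemma shiftFrom_injective (k m : ℕ) : Function.Injective (shiftFrom k m) := by
  intro i j h
  unfold shiftFrom at h
  split_ifs at h <;> omega

lemma range_shiftFrom (k m : ℕ) : Set.range (shiftFrom k m) = {p | p < k ∨ k + m ≤ p} := by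
  ext p
  simp only [Set.mem_range, Set.mem_ofPred_eq, shiftFrom]
  constructor
  · rintro ⟨j, rfl⟩
    split_ifs <;> omega
  · rintro (hp | hp)
    · exact ⟨p, if_pos hp⟩
    · exact ⟨p - m, by rw [if_neg (by omega)]; omega⟩

lemma shiftFrom_succ (h : j + 1 ≠ k) : shiftFrom k m (j + 1) = shiftFrom k m j + 1 := by
  unfold shiftFrom
  split_ifs <;> omega

lemma shiftFrom_lt_add_iff {l : ℕ} : shiftFrom k m j < k + m + l ↔ j < k + l := by
  unfold shiftFrom
  split_ifs <;> omega

lemma List.getElem_append_shiftFrom {α : Type*} (x y z : List α) (h : j < (x ++ z).length) :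
    (x ++ z)[j] = (x ++ y ++ z)[shiftFrom x.length y.length j]'(by
      simp only [List.length_append] at h ⊢; exact shiftFrom_lt_add_iff.mpr h) := by
  unfold shiftFrom
  split_ifs with hj
  · simp [List.getElem_append_left, hj]
  · simp only [List.length_append] at h
    rw [List.getElem_append_right (by omega), List.getElem_append_right (by simp; omega)]
    simp only [List.length_append]
    congr 1
    omega

end shiftFrom

lemma List.IsChain.append_of_append_append {α : Type*} {R : α → α → Prop} {a b c : List α}
    (h : (a ++ b ++ c).IsChain R)
    (hbc : ∀ x ∈ a.getLast?, ∀ y ∈ b.head?, ∀ z ∈ c.head?, R x y → R x z) :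
    (a ++ c).IsChain R := by
  have hab := h.left_of_append
  refine hab.left_of_append.append h.right_of_append fun x hx z hz => ?_
  rcases hb : b.head? with _ | y
  · rw [List.head?_eq_none_iff.mp hb, List.append_nil] at h
    exact (List.isChain_append.mp h).2.2 x hx z hz
  · exact hbc x hx y hb z hz ((List.isChain_append.mp hab).2.2 x hx y hb)

section

variable {A : Type}

def wordStart (ws : List (List A)) (t : ℕ) : ℕ := (ws.take t).flatten.length

section wordStart

variable {ws a c : List (List A)} {j t : ℕ}

@[simp] lemma wordStart_zero (ws : List (List A)) : wordStart ws 0 = 0 := by simp [wordStart]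

lemma wordStart_of_length_le (h : ws.length ≤ t) : wordStart ws t = ws.flatten.length := by
  rw [wordStart, List.take_of_length_le h]

lemma wordStart_mono (ws : List (List A)) : Monotone (wordStart ws) := by
  intro s t hst
  simp only [wordStart, List.length_flatten, List.map_take]
  exact List.monotone_sum_take _ hst

lemma wordStart_append (a c : List (List A)) (t : ℕ) :
    wordStart (a ++ c) t = wordStart a t + wordStart c (t - a.length) := by
  simp [wordStart, List.take_append]

lemma wordStart_lt_succ (hnil : ∀ w ∈ ws, w ≠ []) (ht : t < ws.length) :
    wordStart ws t < wordStart ws (t + 1) := by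
  have hw := List.length_pos_iff.mpr (hnil _ (List.getElem_mem ht))
  simp only [wordStart, List.take_add_one, List.getElem?_eq_getElem ht, Option.toList_some,
    List.flatten_append, List.flatten_singleton, List.length_append]
  omega

lemma wordEnd_iff : WordEnd ws j ↔ ∃ t < ws.length, j + 1 = wordStart ws (t + 1) := by
  simp [WordEnd, wordStart, List.length_flatten, List.map_take]

lemma wordStart_le_length (ws : List (List A)) (t : ℕ) : wordStart ws t ≤ ws.flatten.length :=
  calc wordStart ws t ≤ wordStart ws (max t ws.length) := wordStart_mono ws (le_max_left _ _)
    _ = ws.flatten.length := wordStart_of_length_le (le_max_right _ _)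

lemma WordEnd.lt_length (h : WordEnd ws j) : j < ws.flatten.length := by
  obtain ⟨t, -, ht⟩ := wordEnd_iff.mp h
  have := wordStart_le_length ws (t + 1)
  omega

lemma wordEnd_of_succ_eq_length (h : j + 1 = ws.flatten.length) : WordEnd ws j := by
  have hws : ws ≠ [] := by rintro rfl; simp at h
  refine wordEnd_iff.mpr ⟨ws.length - 1, by simpa [Nat.pos_iff_ne_zero] using hws, ?_⟩
  rw [Nat.sub_add_cancel (List.length_pos_iff.mpr hws), wordStart_of_length_le le_rfl, h]

lemma wordEnd_append (hc : ∀ w ∈ c, w ≠ []) :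
    WordEnd (a ++ c) j ↔
      WordEnd a j ∨ a.flatten.length ≤ j ∧ WordEnd c (j - a.flatten.length) := by
  simp only [wordEnd_iff, wordStart_append, List.length_append]
  constructor
  · rintro ⟨t, ht, hj⟩
    rcases Nat.lt_or_ge t a.length with hta | hta
    · left
      refine ⟨t, hta, ?_⟩
      rw [hj, Nat.sub_eq_zero_of_le hta, wordStart_zero, add_zero]
    · right
      have hpos := wordStart_lt_succ hc (show t - a.length < c.length by omega)
      rw [wordStart_of_length_le (by omega), Nat.sub_add_comm hta] at hj
      exact ⟨by omega, t - a.length, by omega, by omega⟩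
  · rintro (⟨t, ht, hj⟩ | ⟨hj, t, ht, hjt⟩)
    · refine ⟨t, by omega, ?_⟩
      rw [hj, Nat.sub_eq_zero_of_le ht, wordStart_zero, add_zero]
    · refine ⟨a.length + t, by omega, ?_⟩
      rw [wordStart_of_length_le (by omega), show a.length + t + 1 - a.length = t + 1 by omega]
      omega

lemma wordEnd_shiftFrom {b : List (List A)} (hbc : ∀ w ∈ b ++ c, w ≠ []) :
    WordEnd (a ++ c) j ↔
      WordEnd (a ++ b ++ c) (shiftFrom a.flatten.length b.flatten.length j) := by
  have hc : ∀ w ∈ c, w ≠ [] := fun w hw => hbc w (List.mem_append_right b hw)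
  unfold shiftFrom
  split_ifs with hj
  · have hj' : ¬ a.flatten.length ≤ j := by omega
    rw [wordEnd_append hc, List.append_assoc, wordEnd_append hbc]
    simp only [hj', false_and, or_false]
  · have hab : (a ++ b).flatten.length = a.flatten.length + b.flatten.length := by simp
    have ha : ¬ WordEnd a j := fun h => hj h.lt_length
    have hab' : ¬ WordEnd (a ++ b) (j + b.flatten.length) := fun h => by
      have := h.lt_length; omega
    rw [wordEnd_append hc, wordEnd_append hc, hab]
    rw [show j + b.flatten.length - (a.flatten.length + b.flatten.length) = j - a.flatten.length
      by omega]
    simp only [ha, hab', false_or, Nat.le_of_not_lt hj, true_and, Nat.add_le_add_iff_right]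

end wordStart

section removableBlock

variable {S : ℕ} {ws : List (List A)} {sides : ℕ → Fin S} {K : Finset ℕ} {t u : ℕ}

def IsRemovableBlock (ws : List (List A)) (sides : ℕ → Fin S) (K : Finset ℕ) (t u : ℕ) : Prop :=
  t < u ∧ u ≤ ws.length ∧ (∀ p ∈ K, p < wordStart ws t ∨ wordStart ws u ≤ p) ∧
    (u < ws.length → ws[t]?.bind List.head? = ws[u]?.bind List.head? ∧
      sides (wordStart ws t) = sides (wordStart ws u))

lemma isRemovableBlock_last (hws : ws ≠ []) (hK : ∀ p ∈ K, p < wordStart ws (ws.length - 1)) :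
    IsRemovableBlock ws sides K (ws.length - 1) ws.length := by
  have := List.length_pos_iff.mpr hws
  exact ⟨by omega, le_rfl, fun p hp => .inl (hK p hp), fun h => absurd h (lt_irrefl _)⟩

open Finset in
lemma isRemovableBlock_of_card_filter_eq (htu : t < u) (hu : u < ws.length)
    (hhead : ws[t]?.bind List.head? = ws[u]?.bind List.head?)
    (hside : sides (wordStart ws t) = sides (wordStart ws u))
    (hcard : #(K.filter (wordStart ws t ≤ ·)) = #(K.filter (wordStart ws u ≤ ·))) :
    IsRemovableBlock ws sides K t u := by
  have hsub : K.filter (wordStart ws u ≤ ·) ⊆ K.filter (wordStart ws t ≤ ·) :=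
    monotone_filter_right K fun _ _ => (wordStart_mono ws htu.le).trans
  have hafter := eq_of_subset_of_card_le hsub hcard.le
  refine ⟨htu, hu.le, fun p hp => ?_, fun _ => ⟨hhead, hside⟩⟩
  by_cases hpt : wordStart ws t ≤ p
  · have : p ∈ K.filter (wordStart ws u ≤ ·) := hafter ▸ mem_filter.mpr ⟨hp, hpt⟩
    exact .inr (mem_filter.mp this).2
  · exact .inl (by omega)

open Finset in
lemma exists_isRemovableBlock {n : ℕ} [Fintype A] (hnil : ∀ w ∈ ws, w ≠ []) (hK : #K ≤ S * n) (hlong : S ^ 2 * Fintype.card A * n < ws.length) :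
    ∃ t u, IsRemovableBlock ws sides K t u := by
  by_cases hlast : ∀ p ∈ K, p < wordStart ws (ws.length - 1)
  · exact ⟨_, _, isRemovableBlock_last (List.ne_nil_of_length_pos (by omega)) hlast⟩
  obtain ⟨p₀, hp₀K, hp₀⟩ : ∃ p ∈ K, wordStart ws (ws.length - 1) ≤ p := by
    simpa only [not_forall, not_lt, exists_prop] using hlast
  let key (t : ℕ) : Option A × Fin S × ℕ :=
    (ws[t]?.bind List.head?, sides (wordStart ws t), #(K.filter (wordStart ws t ≤ ·)))
  let keys : Finset (Option A × Fin S × ℕ) :=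
    univ.map Function.Embedding.some ×ˢ univ ×ˢ Icc 1 (S * n)
  have hmaps : Set.MapsTo key (range ws.length) keys := by
    intro t ht
    have ht : t < ws.length := by simpa using ht
    have hp₀t : p₀ ∈ K.filter (wordStart ws t ≤ ·) :=
      mem_filter.mpr ⟨hp₀K, (wordStart_mono ws (by omega)).trans hp₀⟩
    simp only [keys, coe_product, coe_map, coe_univ, coe_Icc, Set.mem_prod, Set.mem_image,
      Set.mem_univ, true_and, Set.mem_Icc, key, List.getElem?_eq_getElem ht, Option.bind_some,
      List.head?_eq_some_head (hnil _ (List.getElem_mem ht))]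
    exact ⟨⟨_, rfl⟩, card_pos.mpr ⟨p₀, hp₀t⟩, (card_filter_le _ _).trans hK⟩
  have hcard : #keys < #(range ws.length) := by
    simpa [keys, sq, mul_comm, mul_left_comm, mul_assoc] using hlong
  have hblock : ∀ t u, t < u → u < ws.length → key t = key u → IsRemovableBlock ws sides K t u :=
    fun t u htu hu hkey => by
      simp only [key, Prod.mk.injEq] at hkey
      exact isRemovableBlock_of_card_filter_eq htu hu hkey.1 hkey.2.1 hkey.2.2
  obtain ⟨t, ht, u, hu, htu, hkey⟩ := exists_ne_map_eq_of_card_lt_of_maps_to hcard hmaps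
  rw [mem_range] at ht hu
  rcases Nat.lt_or_gt_of_ne htu with htu | htu
  · exact ⟨t, u, hblock t u htu hu hkey⟩
  · exact ⟨u, t, hblock u t htu ht hkey.symm⟩

end removableBlock

section solution

variable {S : ℕ} {a b c : List (List A)} {j : ℕ}

lemma shiftFrom_lt_length_flatten_iff :
    shiftFrom a.flatten.length b.flatten.length j < (a ++ b ++ c).flatten.length ↔
      j < (a ++ c).flatten.length := by
  simp only [List.flatten_append, List.length_append]
  exact shiftFrom_lt_add_iff

lemma List.getElem_flatten_append_shiftFrom (h : j < (a ++ c).flatten.length) :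
    (a ++ c).flatten[j] = (a ++ b ++ c).flatten[shiftFrom a.flatten.length b.flatten.length j]'
      (shiftFrom_lt_length_flatten_iff.mpr h) := by
  simp only [List.flatten_append]
  exact List.getElem_append_shiftFrom _ _ _ _

def coverPositions (ws : List (List A)) (sides : ℕ → Fin S) (i : Fin S) (γ : A) : Set ℕ :=
  {j | ∃ h : j < ws.flatten.length, ws.flatten[j] = γ ∧ sides j = i ∧
    (j + 1 = ws.flatten.length ∨ ¬ WordEnd ws j)}

lemma coverPositions_finite (ws : List (List A)) (sides : ℕ → Fin S) (i : Fin S) (γ : A) :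
    (coverPositions ws sides i γ).Finite :=
  (Set.finite_Iio ws.flatten.length).subset fun _ ⟨h, _⟩ => h

lemma ncard_coverPositions_inter_range_shiftFrom_le (hbc : ∀ w ∈ b ++ c, w ≠ [])
    (sides : ℕ → Fin S) (i : Fin S) (γ : A) :
    (coverPositions (a ++ b ++ c) sides i γ ∩
        Set.range (shiftFrom a.flatten.length b.flatten.length)).ncard ≤
      (coverPositions (a ++ c) (sides ∘ shiftFrom a.flatten.length b.flatten.length) i γ).ncard := by
  rw [← Set.ncard_preimage_of_injective_subset_range (shiftFrom_injective _ _)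
    Set.inter_subset_right]
  refine Set.ncard_le_ncard ?_ (coverPositions_finite _ _ _ _)
  rintro j ⟨⟨hjX, hγ, hsj, hlast⟩, -⟩
  have hj := shiftFrom_lt_length_flatten_iff.mp hjX
  refine ⟨hj, (List.getElem_flatten_append_shiftFrom hj).trans hγ, hsj, ?_⟩
  rcases hlast with h | h
  · left
    simp only [List.flatten_append, List.length_append, shiftFrom] at h ⊢
    split_ifs at h <;> omega
  · exact Or.inr ((wordEnd_shiftFrom hbc).not.mpr h)

variable [DecidableEq A]

lemma isLBSolution_iff {D : Finset (List A)} {Γ : Fin S → Multiset A} {ws : List (List A)}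
    {sides : ℕ → Fin S} :
    IsLBSolution D Γ ws sides ↔
      (∀ w ∈ ws, w ∈ D) ∧ ws.IsChain (fun u v => u.getLast? = v.head?) ∧
      (∀ j : ℕ, j + 1 < ws.flatten.length →
        ((WordEnd ws j → sides j = sides (j + 1)) ∧
          (¬ WordEnd ws j → sides j ≠ sides (j + 1)))) ∧
      (∀ (j : ℕ) (h : j < ws.flatten.length), ws.flatten[j] ∈ Γ (sides j)) ∧
      (∀ (i : Fin S) (γ : A), (Γ i).count γ ≤ (coverPositions ws sides i γ).ncard) := by
  refine and_congr_right fun _ => and_congr_left fun _ => ?_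
  simp only [List.isChain_iff_getElem]
  refine forall_congr' fun i => ⟨fun h hi => ?_, fun h hi => ?_⟩ <;>
    simpa [List.getElem?_eq_getElem (show i < ws.length by omega), hi] using h hi

variable {D : Finset (List A)} {Γ : Fin S → Multiset A}

lemma IsLBSolution.remove_middle {sides : ℕ → Fin S}
    (hD : ∀ w ∈ D, w ≠ []) (hsol : IsLBSolution D Γ (a ++ b ++ c) sides)
    (hhead : ∀ v ∈ b.head?, ∀ w ∈ c.head?, v.head? = w.head?)
    (hside : c ≠ [] → sides a.flatten.length = sides (a.flatten.length + b.flatten.length))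
    (hcover : ∀ i γ, (Γ i).count γ ≤ (coverPositions (a ++ b ++ c) sides i γ ∩
      Set.range (shiftFrom a.flatten.length b.flatten.length)).ncard) :
    IsLBSolution D Γ (a ++ c) (sides ∘ shiftFrom a.flatten.length b.flatten.length) := by
  rw [isLBSolution_iff] at hsol ⊢
  obtain ⟨hmem, hchain, halt, hΓ, -⟩ := hsol
  set φ := shiftFrom a.flatten.length b.flatten.length with hφ
  have hbc : ∀ w ∈ b ++ c, w ≠ [] := fun w hw =>
    hD w (hmem w (by rw [List.append_assoc]; exact List.mem_append_right a hw))
  have hwe : ∀ j, WordEnd (a ++ c) j ↔ WordEnd (a ++ b ++ c) (φ j) :=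
    fun _ => wordEnd_shiftFrom hbc
  refine ⟨fun w hw => hmem w ?_,
    hchain.append_of_append_append fun _ _ v hv w hw hxv => hxv.trans (hhead v hv w hw),
    fun j hj => ?_, fun j hj => List.getElem_flatten_append_shiftFrom hj ▸ hΓ (φ j) _,
    fun i γ => (hcover i γ).trans (ncard_coverPositions_inter_range_shiftFrom_le hbc sides i γ)⟩
  · rcases List.mem_append.mp hw with hw | hw <;> simp [hw]
  by_cases hja : j + 1 = a.flatten.length
  · have hend : WordEnd (a ++ c) j :=
      (wordEnd_append fun w hw => hbc w (List.mem_append_right b hw)).mpr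
        (Or.inl (wordEnd_of_succ_eq_length hja))
    refine ⟨fun _ => ?_, fun h => absurd hend h⟩
    have hc : c ≠ [] := by
      rintro rfl
      rw [List.append_nil] at hj
      omega
    have hφj : φ j = j := if_pos (by omega)
    have hφj' : φ (j + 1) = a.flatten.length + b.flatten.length := by
      rw [hφ, shiftFrom, if_neg (by omega), hja]
    have hX := (halt j (by simp only [List.flatten_append, List.length_append] at hj ⊢; omega)).1
      (hφj ▸ (hwe j).mp hend)
    rw [Function.comp_apply, Function.comp_apply, hφj, hφj', hX, hja]
    exact hside hc
  · have hφs : φ (j + 1) = φ j + 1 := shiftFrom_succ hja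
    have hX := halt (φ j) (by rw [← hφs]; exact shiftFrom_lt_length_flatten_iff.mpr hj)
    simpa only [Function.comp_apply, hφs, hwe] using hX

variable {ws : List (List A)} {sides : ℕ → Fin S}

lemma IsLBSolution.remove_block {K : Finset ℕ} {t u : ℕ} (hD : ∀ w ∈ D, w ≠ [])
    (hsol : IsLBSolution D Γ ws sides)
    (hcover : ∀ i γ, (Γ i).count γ ≤ (coverPositions ws sides i γ ∩ K).ncard)
    (hblock : IsRemovableBlock ws sides K t u) :
    IsLBSolution D Γ (ws.take t ++ ws.drop u)
      (sides ∘ shiftFrom (wordStart ws t) (wordStart ws u - wordStart ws t)) := by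
  obtain ⟨htu, -, hK, hjunction⟩ := hblock
  set b := (ws.drop t).take (u - t)
  have hab : ws.take t ++ b = ws.take u := by rw [← List.take_add, Nat.add_sub_cancel' htu.le]
  have hws : ws.take t ++ b ++ ws.drop u = ws := by rw [hab, List.take_append_drop]
  have hbl : (ws.take t).flatten.length + b.flatten.length = wordStart ws u := by
    rw [wordStart, ← hab, List.flatten_append, List.length_append]
  have hlast : ws.drop u ≠ [] → u < ws.length := by
    rw [Ne, List.drop_eq_nil_iff]; omega
  have key := IsLBSolution.remove_middle hD (hws.symm ▸ hsol) ?_ ?_ ?_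
  · rwa [show b.flatten.length = wordStart ws u - wordStart ws t by
      simp only [wordStart] at hbl ⊢; omega] at key
  · intro v hv w hw
    rw [List.head?_drop, Option.mem_def] at hw
    rw [List.head?_take, if_neg (by omega), List.head?_drop] at hv
    have := (hjunction (List.getElem?_eq_some_iff.mp hw).1).1
    rwa [Option.mem_def.mp hv, hw, Option.bind_some, Option.bind_some] at this
  · intro hc
    rw [hbl]
    exact (hjunction (hlast hc)).2
  · rw [hws, range_shiftFrom, hbl]
    exact fun i γ => (hcover i γ).trans <| Set.ncard_le_ncard
      (Set.inter_subset_inter_right _ hK) ((coverPositions_finite ..).inter_of_left _)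

variable {n : ℕ} [Fintype A]

open Finset in
lemma IsLBSolution.exists_cover (hsol : IsLBSolution D Γ ws sides)
    (hΓ : ∀ i, Multiset.card (Γ i) = n) :
    ∃ K : Finset ℕ, #K ≤ S * n ∧
      ∀ i γ, (Γ i).count γ ≤ (coverPositions ws sides i γ ∩ K).ncard := by
  have hW : ∀ i γ, ∃ W ⊆ (coverPositions_finite ws sides i γ).toFinset, #W = (Γ i).count γ :=
    fun i γ => exists_subset_card_eq <| by
      rw [← Set.ncard_eq_toFinset_card _ (coverPositions_finite ws sides i γ)]
      exact (isLBSolution_iff.mp hsol).2.2.2.2 i γ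
  choose W hWsub hWcard using hW
  refine ⟨univ.biUnion fun i => univ.biUnion (W i), ?_, fun i γ => ?_⟩
  · calc #(univ.biUnion fun i => univ.biUnion (W i))
        ≤ ∑ i, #(univ.biUnion (W i)) := card_biUnion_le
      _ ≤ ∑ i, ∑ γ, #(W i γ) := sum_le_sum fun i _ => card_biUnion_le
      _ = S * n := by simp [hWcard, Multiset.sum_count_eq_card, hΓ]
  · rw [← hWcard, ← Set.ncard_coe_finset]
    refine Set.ncard_le_ncard (fun p hp => ⟨?_, ?_⟩) ((coverPositions_finite ..).inter_of_left _)
    · simpa using hWsub i γ hp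
    · simpa using ⟨i, γ, hp⟩

lemma IsLBSolution.exists_shorter (hD : ∀ w ∈ D, w ≠ []) (hΓ : ∀ i, Multiset.card (Γ i) = n)
    (hsol : IsLBSolution D Γ ws sides) (hlong : S ^ 2 * Fintype.card A * n < ws.length) :
    ∃ (ws' : List (List A)) (sides' : ℕ → Fin S),
      ws'.length < ws.length ∧ IsLBSolution D Γ ws' sides' := by
  obtain ⟨K, hK, hKcover⟩ := hsol.exists_cover hΓ
  obtain ⟨t, u, hblock⟩ :=
    exists_isRemovableBlock (sides := sides) (fun w hw => hD w (hsol.1 w hw)) hK hlong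
  refine ⟨_, _, ?_, hsol.remove_block hD hKcover hblock⟩
  obtain ⟨htu, hu, -⟩ := hblock
  simp only [List.length_append, List.length_take, List.length_drop]
  omega

end solution

end

/-- If an `S`-sides Letter Boxed puzzle whose sides all have size `n` admits a solution,
then it admits a solution using at most `S² · |Σ| · n` words. -/
theorem letterBoxed_short_solution {S n : ℕ} {A : Type} [Fintype A] [DecidableEq A]
    (D : Finset (List A)) (hD : ∀ w ∈ D, w ≠ [])
    (Γ : Fin S → Multiset A) (hΓ : ∀ i, Multiset.card (Γ i) = n)
    (h : ∃ (ws : List (List A)) (sides : ℕ → Fin S), IsLBSolution D Γ ws sides) :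
    ∃ (ws : List (List A)) (sides : ℕ → Fin S),
      ws.length ≤ S ^ 2 * Fintype.card A * n ∧ IsLBSolution D Γ ws sides := by
  obtain ⟨ws, sides, hsol⟩ := h
  induction hT : ws.length using Nat.strong_induction_on generalizing ws sides with
  | _ T ih =>
    by_cases hshort : ws.length ≤ S ^ 2 * Fintype.card A * n
    · exact ⟨ws, sides, hshort, hsol⟩
    · obtain ⟨ws', sides', hlt, hsol'⟩ := hsol.exists_shorter hD hΓ (by omega)
      exact ih _ (hT ▸ hlt) ws' sides' hsol' rfl
end

section
/- Let (Σ, D, Γ₁, …, Γ_S) be an S-sides Letter Boxed puzzle in which every word of D has length at most L and the multisets satisfy Σᵢ |Γᵢ| = S·n. If S·n > k·(L − 1) + 1, then the puzzle admits no solution of length at most k. -/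
/-!
Only the positions of `σ` that are not the end of a non-final word can cover a letter of a
side, and each of them covers at most one letter of one side, so `S · n` is at most the number
of such positions. The `m` words end at `m` distinct positions, of which only the last may
count, and `|σ| ≤ m L`; hence at most `m (L - 1) + 1 ≤ k (L - 1) + 1` positions count.
-/

open Finset

theorem List.sum_take_lt_sum_take_of_pos {l : List ℕ} (hl : ∀ x ∈ l, 0 < x) {a b : ℕ}
    (hab : a < b) (hb : b ≤ l.length) : (l.take a).sum < (l.take b).sum := by
  obtain ⟨d, rfl⟩ := Nat.exists_eq_add_of_le hab.le
  rw [List.take_add, List.sum_append]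
  have hpos : 0 < ((l.drop a).take d).sum :=
    List.sum_pos _ (fun x hx => hl x (List.mem_of_mem_drop (List.mem_of_mem_take hx)))
      (by simp; omega)
  omega

theorem Multiset.card_le_card_of_count_le {α β : Type*} [DecidableEq α] {Γ : Multiset α}
    {G : Finset β} {R : β → α → Prop} [DecidableRel R]
    (hR : ∀ j γ γ', R j γ → R j γ' → γ = γ') (h : ∀ γ, Γ.count γ ≤ #{j ∈ G | R j γ}) :
    Multiset.card Γ ≤ #G := by
  classical
  have hdisj : (Γ.toFinset : Set α).PairwiseDisjoint fun γ => {j ∈ G | R j γ} := by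
    intro γ _ γ' _ hne
    refine disjoint_filter.2 fun j _ hγ hγ' => hne (hR j γ γ' hγ hγ')
  calc Multiset.card Γ = ∑ γ ∈ Γ.toFinset, Γ.count γ := (Multiset.toFinset_sum_count_eq Γ).symm
    _ ≤ ∑ γ ∈ Γ.toFinset, #{j ∈ G | R j γ} := sum_le_sum fun γ _ => h γ
    _ = #(Γ.toFinset.biUnion fun γ => {j ∈ G | R j γ}) := (card_biUnion hdisj).symm
    _ ≤ #G := Finset.card_le_card (biUnion_subset.2 fun _ _ => filter_subset _ _)

instance {A : Type} (ws : List (List A)) : DecidablePred (WordEnd ws) := fun j => by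
  unfold WordEnd; infer_instance

section WordEnd

variable {A : Type} {ws : List (List A)}

theorem length_le_card_wordEnd (hne : ∀ w ∈ ws, w ≠ []) :
    ws.length ≤ #{j ∈ range ws.flatten.length | WordEnd ws j} := by
  obtain ⟨l, hl⟩ : ∃ l, l = ws.map List.length := ⟨_, rfl⟩
  have hlen : l.length = ws.length := hl ▸ List.length_map _
  have hpos : ∀ x ∈ l, 0 < x := by
    simpa [hl, List.length_pos_iff] using hne
  have hlt : ∀ a b, a < b → b ≤ ws.length → (l.take a).sum < (l.take b).sum :=
    fun a b hab hb => List.sum_take_lt_sum_take_of_pos hpos hab (hlen ▸ hb)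
  have hpos' : ∀ t < ws.length, 0 < (l.take (t + 1)).sum := fun t ht => by
    simpa using hlt 0 (t + 1) (by omega) (by omega)
  have hle : ∀ t, (l.take t).sum ≤ ws.flatten.length := fun t => by
    have := List.sum_take_add_sum_drop l t
    rw [List.length_flatten, ← hl]
    omega
  -- the `t`-th word ends at position `(l.take (t + 1)).sum - 1`
  calc ws.length = #(range ws.length) := (card_range _).symm
    _ ≤ _ := card_le_card_of_injOn (fun t => (l.take (t + 1)).sum - 1) (fun t ht => by
      simp only [coe_range, Set.mem_Iio, coe_filter, mem_range, Set.mem_ofPred_eq] at ht ⊢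
      have := hpos' t ht
      exact ⟨by have := hle (t + 1); omega, t, ht, by rw [List.map_take, ← hl]; omega⟩)
      (fun a ha b hb hab => by
        simp only [coe_range, Set.mem_Iio] at ha hb hab
        have := hpos' a ha
        have := hpos' b hb
        rcases lt_trichotomy a b with h | h | h
        · have := hlt (a + 1) (b + 1) (by omega) (by omega); omega
        · exact h
        · have := hlt (b + 1) (a + 1) (by omega) (by omega); omega)

variable (ws) in
def coveringPositions : Finset ℕ :=
  {j ∈ range ws.flatten.length | j + 1 = ws.flatten.length ∨ ¬ WordEnd ws j}

theorem card_coveringPositions_le (hne : ∀ w ∈ ws, w ≠ []) :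
    #(coveringPositions ws) ≤ ws.flatten.length - ws.length + 1 := by
  have hends := length_le_card_wordEnd hne
  have hlast : #{j ∈ range ws.flatten.length | j + 1 = ws.flatten.length} ≤ 1 :=
    card_le_one.2 fun a ha b hb => by simp only [mem_filter] at ha hb; omega
  have hsplit : #{j ∈ range ws.flatten.length | WordEnd ws j} +
      #{j ∈ range ws.flatten.length | ¬ WordEnd ws j} = ws.flatten.length := by
    rw [card_filter_add_card_filter_not, card_range]
  rw [coveringPositions, filter_or]
  grw [card_union_le]
  omega

theorem card_coveringPositions_le_mul (hne : ∀ w ∈ ws, w ≠ []) {L : ℕ}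
    (hL : ∀ w ∈ ws, w.length ≤ L) :
    #(coveringPositions ws) ≤ ws.length * (L - 1) + 1 := by
  have hN : ws.flatten.length ≤ ws.length * L := by
    simpa [List.length_flatten] using List.sum_le_card_nsmul (ws.map List.length) L (by simpa)
  have := card_coveringPositions_le hne
  rw [Nat.mul_sub_one]
  omega

theorem ncard_covering_eq_card_filter [DecidableEq A] {S : ℕ} (sides : ℕ → Fin S) (i : Fin S) (γ : A) :
    {j : ℕ | ∃ h : j < ws.flatten.length, ws.flatten.get ⟨j, h⟩ = γ ∧ sides j = i ∧
        (j + 1 = ws.flatten.length ∨ ¬ WordEnd ws j)}.ncard =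
      #{j ∈ {j ∈ coveringPositions ws | sides j = i} |
        ∃ h : j < ws.flatten.length, ws.flatten.get ⟨j, h⟩ = γ} := by
  rw [← Set.ncard_coe_finset]
  congr 1
  ext j
  simp only [coveringPositions, coe_filter, mem_filter, mem_range, Set.mem_ofPred_eq]
  constructor
  · rintro ⟨hj, hγ, hs, hc⟩
    exact ⟨⟨⟨hj, hc⟩, hs⟩, hj, hγ⟩
  · rintro ⟨⟨⟨hj, hc⟩, hs⟩, _, hγ⟩
    exact ⟨hj, hγ, hs, hc⟩

end WordEnd

/-- If every word of the dictionary has length at most `L`, the sides have total size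
`S · n`, and `S · n > k·(L − 1) + 1`, then the puzzle has no solution with at most `k`
words. -/
theorem letterBoxed_too_few_words {S n k L : ℕ} {A : Type} [DecidableEq A]
    (D : Finset (List A)) (hD : ∀ w ∈ D, w ≠ [])
    (hL : ∀ w ∈ D, w.length ≤ L)
    (Γ : Fin S → Multiset A) (hΓ : (∑ i : Fin S, Multiset.card (Γ i)) = S * n)
    (hbig : S * n > k * (L - 1) + 1) :
    ¬ ∃ (ws : List (List A)) (sides : ℕ → Fin S),
        ws.length ≤ k ∧ IsLBSolution D Γ ws sides := by
  rintro ⟨ws, sides, hk, hwD, -, -, -, hcov⟩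
  have hside : ∀ i, Multiset.card (Γ i) ≤ #{j ∈ coveringPositions ws | sides j = i} := fun i =>
    Multiset.card_le_card_of_count_le (R := fun j γ => ∃ h : j < ws.flatten.length,
        ws.flatten.get ⟨j, h⟩ = γ)
      (fun j γ γ' ⟨_, hγ⟩ ⟨_, hγ'⟩ => hγ ▸ hγ')
      (fun γ => ncard_covering_eq_card_filter sides i γ ▸ hcov i γ)
  have hcover : S * n ≤ #(coveringPositions ws) := by
    rw [← hΓ, card_eq_sum_card_fiberwise (f := sides) (t := univ) (fun _ _ => mem_univ _)]
    exact sum_le_sum fun i _ => hside i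
  have hcount := card_coveringPositions_le_mul (fun w hw => hD w (hwD w hw))
    (fun w hw => hL w (hwD w hw))
  have := Nat.mul_le_mul_right (L - 1) hk
  omega
end

section
/- Let (Σ, {σ}, Γ₁, Γ₂, Γ₃, Γ₄) be a 4-sides Letter Boxed puzzle with a single dictionary word σ, with Γ₂ = Γ₃, |Γ₂| > |Γ₁| = 1, and Γ₄ = ∅, and let τ be a fresh character not in Σ. Form the padded puzzle over alphabet Σ ∪ {τ} whose single dictionary word is σ followed by 2|Γ₂| − 1 copies of τ, whose first side is Γ₁ plus |Γ₂| − 1 copies of τ, whose second and third sides are Γ₂ and Γ₃ unchanged, and whose fourth side consists of |Γ₂| copies of τ (so all four sides have the same cardinality). Then the padded puzzle admits a solution of length 1 if and only if the original puzzle admits a solution of length 1. -/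
/-! Auxiliary lemmas for `letterBoxed_padding`. -/

lemma LBAux.wordEnd_singleton {A : Type} (w : List A) (j : ℕ) :
    WordEnd [w] j ↔ j + 1 = w.length := by
  constructor
  · rintro ⟨t, ht, h⟩
    have : t = 0 := by simp at ht; omega
    subst this
    simpa using h
  · intro h
    exact ⟨0, by norm_num, by simpa using h⟩

lemma LBAux.cond_triv {A : Type} (w : List A) (j : ℕ) :
    j + 1 = w.length ∨ ¬ WordEnd [w] j := by
  by_cases h' : j + 1 = w.length
  · exact Or.inl h'
  · exact Or.inr (by rw [LBAux.wordEnd_singleton]; exact h')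

lemma LBAux.get_pad_left {A : Type} (σ : List A) (c j : ℕ) (hj : j < σ.length)
    (hj' : j < (σ.map some ++ List.replicate c (none : Option A)).length) :
    (σ.map some ++ List.replicate c (none : Option A)).get ⟨j, hj'⟩ = some (σ.get ⟨j, hj⟩) := by
  rw [List.get_eq_getElem, List.get_eq_getElem,
    List.getElem_append_left (by simpa using hj)]
  simp

lemma LBAux.get_pad_right {A : Type} (σ : List A) (c j : ℕ) (hj : σ.length ≤ j)
    (hj' : j < (σ.map some ++ List.replicate c (none : Option A)).length) :
    (σ.map some ++ List.replicate c (none : Option A)).get ⟨j, hj'⟩ = none := by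
  rw [List.get_eq_getElem, List.getElem_append_right (by simpa using hj)]
  simp

/-- The covering set for a `some` character in the padded puzzle equals the covering
set in the original puzzle. -/
lemma LBAux.keyset {A : Type} (σ : List A) (c : ℕ) (sides sides' : ℕ → Fin 4)
    (hss : ∀ j < σ.length, sides' j = sides j) (i : Fin 4) (γ : A) :
    {j : ℕ | ∃ h : j < (σ.map some ++ List.replicate c (none : Option A)).length,
        (σ.map some ++ List.replicate c (none : Option A)).get ⟨j, h⟩ = some γ ∧
        sides' j = i ∧
        (j + 1 = (σ.map some ++ List.replicate c (none : Option A)).length ∨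
          ¬ WordEnd [σ.map some ++ List.replicate c (none : Option A)] j)} =
    {j : ℕ | ∃ h : j < σ.length, σ.get ⟨j, h⟩ = γ ∧ sides j = i ∧
        (j + 1 = σ.length ∨ ¬ WordEnd [σ] j)} := by
  ext j
  simp only [Set.mem_setOf_eq]
  constructor
  · rintro ⟨h, hg, hs, -⟩
    by_cases hjn : j < σ.length
    · refine ⟨hjn, ?_, ?_, LBAux.cond_triv σ j⟩
      · rw [LBAux.get_pad_left σ c j hjn h] at hg
        exact Option.some_injective A hg
      · rw [← hss j hjn]; exact hs
    · exfalso
      rw [LBAux.get_pad_right σ c j (le_of_not_gt hjn) h] at hg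
      simp at hg
  · rintro ⟨h, hg, hs, -⟩
    have h' : j < (σ.map some ++ List.replicate c (none : Option A)).length := by
      simp; omega
    refine ⟨h', ?_, ?_, LBAux.cond_triv _ j⟩
    · rw [LBAux.get_pad_left σ c j h h', hg]
    · rw [hss j h]; exact hs

/-- The padded side assignment: keep `sides` on the word, then alternate sides
`3, 0, 3, 0, …` on the padding. -/
def LBAux.padSides (n : ℕ) (sides : ℕ → Fin 4) : ℕ → Fin 4 :=
  fun j => if j < n then sides j else if (j - n) % 2 = 0 then 3 else 0

lemma LBAux.padSides_lt {n j : ℕ} (sides : ℕ → Fin 4) (h : j < n) :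
    LBAux.padSides n sides j = sides j := if_pos h

lemma LBAux.padSides_even {n j : ℕ} (sides : ℕ → Fin 4) (h : ¬ j < n)
    (h2 : (j - n) % 2 = 0) : LBAux.padSides n sides j = 3 := by
  rw [LBAux.padSides, if_neg h, if_pos h2]

lemma LBAux.padSides_odd {n j : ℕ} (sides : ℕ → Fin 4) (h : ¬ j < n)
    (h2 : (j - n) % 2 = 1) : LBAux.padSides n sides j = 0 := by
  rw [LBAux.padSides, if_neg h, if_neg (by omega)]

/-- Padding a single-word puzzle so that all four sides get the same cardinality.
The fresh character `τ` is modelled by `none : Option A`.  The puzzle has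
`Γ₂ = Γ₃`, `|Γ₂| > |Γ₁| = 1` and `Γ₄ = ∅`; the padded puzzle appends `2|Γ₂| − 1`
copies of `τ` to the word, adds `|Γ₂| − 1` copies of `τ` to the first side, and lets
the fourth side consist of `|Γ₂|` copies of `τ`.  The padded puzzle admits a solution
of length 1 iff the original puzzle does. -/
theorem letterBoxed_padding {A : Type} [DecidableEq A]
    (σ : List A) (hσ : σ ≠ [])
    (Γ₁ Γ₂ Γ₃ Γ₄ : Multiset A)
    (h23 : Γ₂ = Γ₃) (h1 : Multiset.card Γ₁ = 1) (h21 : 1 < Multiset.card Γ₂)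
    (h4 : Γ₄ = 0) :
    (∃ (ws : List (List (Option A))) (sides : ℕ → Fin 4),
        ws.length = 1 ∧
        IsLBSolution
          {σ.map some ++ List.replicate (2 * Multiset.card Γ₂ - 1) (none : Option A)}
          ![Γ₁.map some + Multiset.replicate (Multiset.card Γ₂ - 1) (none : Option A),
            Γ₂.map some, Γ₃.map some,
            Multiset.replicate (Multiset.card Γ₂) (none : Option A)]
          ws sides) ↔
    (∃ (ws : List (List A)) (sides : ℕ → Fin 4),
        ws.length = 1 ∧ IsLBSolution {σ} ![Γ₁, Γ₂, Γ₃, Γ₄] ws sides) := by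
  
  have fin4 : ∀ i : Fin 4, i = 0 ∨ i = 1 ∨ i = 2 ∨ i = 3 := by decide
  have hn1 : 0 < σ.length := List.length_pos_iff.mpr hσ
  have hflatO : ([σ] : List (List A)).flatten = σ := by simp
  have hflatP : ([σ.map some ++ List.replicate (2 * Multiset.card Γ₂ - 1) (none : Option A)] :
      List (List (Option A))).flatten
      = σ.map some ++ List.replicate (2 * Multiset.card Γ₂ - 1) (none : Option A) := by simp
  have hlen' : (σ.map some ++ List.replicate (2 * Multiset.card Γ₂ - 1) (none : Option A)).length
      = σ.length + (2 * Multiset.card Γ₂ - 1) := by simp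
  constructor
  · rintro ⟨ws, sides, hlen, hsol⟩
    unfold IsLBSolution at hsol
    obtain ⟨hD, hlink, halt, hmem, hcov⟩ := hsol
    obtain ⟨w, rfl⟩ := List.length_eq_one_iff.mp hlen
    have hw : w = σ.map some ++ List.replicate (2 * Multiset.card Γ₂ - 1) (none : Option A) := by
      simpa using hD w (by simp)
    subst hw
    rw [hflatP] at halt hmem hcov
    refine ⟨[σ], sides, rfl, ?_⟩
    unfold IsLBSolution
    rw [hflatO]
    refine ⟨by simp, by intro i hi; simp at hi, ?_, ?_, ?_⟩
    · -- alternation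
      intro j hj
      constructor
      · intro hWE
        rw [LBAux.wordEnd_singleton] at hWE
        omega
      · intro _
        refine (halt j ?_).2 ?_
        · rw [hlen']; omega
        · rw [LBAux.wordEnd_singleton, hlen']; omega
    · -- membership
      intro j hj
      have hj' : j < (σ.map some ++ List.replicate (2 * Multiset.card Γ₂ - 1) (none : Option A)).length := by
        rw [hlen']; omega
      have hg := hmem j hj'
      rw [LBAux.get_pad_left σ _ j hj hj'] at hg
      rcases fin4 (sides j) with h|h|h|h
      · rw [h] at hg ⊢
        show σ.get ⟨j, hj⟩ ∈ Γ₁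
        rcases Multiset.mem_add.mp hg with hg' | hg'
        · exact (Multiset.mem_map_of_injective (Option.some_injective A)).mp hg'
        · exact absurd (Multiset.eq_of_mem_replicate hg') (by simp)
      · rw [h] at hg ⊢
        show σ.get ⟨j, hj⟩ ∈ Γ₂
        exact (Multiset.mem_map_of_injective (Option.some_injective A)).mp hg
      · rw [h] at hg ⊢
        show σ.get ⟨j, hj⟩ ∈ Γ₃
        exact (Multiset.mem_map_of_injective (Option.some_injective A)).mp hg
      · rw [h] at hg
        exact absurd (Multiset.eq_of_mem_replicate hg) (by simp)
    · -- covering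
      intro i γ
      rcases fin4 i with rfl | rfl | rfl | rfl
      · have hc := hcov 0 (some γ)
        rw [LBAux.keyset σ _ sides sides (fun _ _ => rfl) 0 γ] at hc
        refine le_trans (le_of_eq ?_) hc
        show Γ₁.count γ
            = (Γ₁.map some + Multiset.replicate (Multiset.card Γ₂ - 1) (none : Option A)).count (some γ)
        rw [Multiset.count_add, Multiset.count_map_eq_count' _ _ (Option.some_injective A),
          Multiset.count_replicate, if_neg (by simp), add_zero]
      · have hc := hcov 1 (some γ)
        rw [LBAux.keyset σ _ sides sides (fun _ _ => rfl) 1 γ] at hc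
        refine le_trans (le_of_eq ?_) hc
        show Γ₂.count γ = (Γ₂.map some).count (some γ)
        rw [Multiset.count_map_eq_count' _ _ (Option.some_injective A)]
      · have hc := hcov 2 (some γ)
        rw [LBAux.keyset σ _ sides sides (fun _ _ => rfl) 2 γ] at hc
        refine le_trans (le_of_eq ?_) hc
        show Γ₃.count γ = (Γ₃.map some).count (some γ)
        rw [Multiset.count_map_eq_count' _ _ (Option.some_injective A)]
      · show Γ₄.count γ ≤ _
        rw [h4]
        simp
  · rintro ⟨ws, sides, hlen, hsol⟩
    unfold IsLBSolution at hsol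
    obtain ⟨hD, hlink, halt, hmem, hcov⟩ := hsol
    obtain ⟨w, rfl⟩ := List.length_eq_one_iff.mp hlen
    have hw : w = σ := by simpa using hD w (by simp)
    subst w
    rw [hflatO] at halt hmem hcov
    have hside3 : ∀ j, j < σ.length → sides j ≠ 3 := by
      intro j hj h3
      have hm := hmem j hj
      rw [h3] at hm
      rw [show (![Γ₁, Γ₂, Γ₃, Γ₄] : Fin 4 → Multiset A) 3 = Γ₄ from rfl, h4] at hm
      exact Multiset.notMem_zero _ hm
    refine ⟨[σ.map some ++ List.replicate (2 * Multiset.card Γ₂ - 1) (none : Option A)],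
      LBAux.padSides σ.length sides, rfl, ?_⟩
    unfold IsLBSolution
    rw [hflatP]
    refine ⟨by simp, by intro i hi; simp at hi, ?_, ?_, ?_⟩
    · -- alternation
      intro j hj
      rw [hlen'] at hj
      constructor
      · intro hWE
        rw [LBAux.wordEnd_singleton, hlen'] at hWE
        omega
      · intro _
        by_cases h1 : j + 1 < σ.length
        · rw [LBAux.padSides_lt sides (by omega), LBAux.padSides_lt sides h1]
          exact (halt j h1).2 (by rw [LBAux.wordEnd_singleton]; omega)
        · by_cases h2 : j + 1 = σ.length
          · rw [LBAux.padSides_lt sides (by omega),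
              LBAux.padSides_even sides (by omega) (by omega)]
            exact hside3 j (by omega)
          · rcases Nat.mod_two_eq_zero_or_one (j - σ.length) with h | h
            · rw [LBAux.padSides_even sides (by omega) h,
                LBAux.padSides_odd sides (by omega) (by omega)]
              decide
            · rw [LBAux.padSides_odd sides (by omega) h,
                LBAux.padSides_even sides (by omega) (by omega)]
              decide
    · -- membership
      intro j hj
      by_cases h1 : j < σ.length
      · rw [LBAux.get_pad_left σ _ j h1 hj, LBAux.padSides_lt sides h1]
        have hm := hmem j h1
        rcases fin4 (sides j) with h | h | h | h
        · rw [h] at hm ⊢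
          show some (σ.get ⟨j, h1⟩)
              ∈ Γ₁.map some + Multiset.replicate (Multiset.card Γ₂ - 1) (none : Option A)
          exact Multiset.mem_add.mpr (Or.inl (Multiset.mem_map_of_mem _ hm))
        · rw [h] at hm ⊢
          show some (σ.get ⟨j, h1⟩) ∈ Γ₂.map some
          exact Multiset.mem_map_of_mem _ hm
        · rw [h] at hm ⊢
          show some (σ.get ⟨j, h1⟩) ∈ Γ₃.map some
          exact Multiset.mem_map_of_mem _ hm
        · exact absurd h (hside3 j h1)
      · rw [LBAux.get_pad_right σ _ j (le_of_not_gt h1) hj]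
        rcases Nat.mod_two_eq_zero_or_one (j - σ.length) with h | h
        · rw [LBAux.padSides_even sides h1 h]
          show (none : Option A) ∈ Multiset.replicate (Multiset.card Γ₂) (none : Option A)
          exact Multiset.mem_replicate.mpr ⟨by omega, rfl⟩
        · rw [LBAux.padSides_odd sides h1 h]
          show (none : Option A)
              ∈ Γ₁.map some + Multiset.replicate (Multiset.card Γ₂ - 1) (none : Option A)
          exact Multiset.mem_add.mpr (Or.inr (Multiset.mem_replicate.mpr ⟨by omega, rfl⟩))
    · -- covering
      intro i γ'
      rcases γ' with _ | γ
      · -- character `none`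
        rcases fin4 i with rfl | rfl | rfl | rfl
        · have hset : {j : ℕ | ∃ h : j < (σ.map some ++ List.replicate (2 * Multiset.card Γ₂ - 1) (none : Option A)).length,
              (σ.map some ++ List.replicate (2 * Multiset.card Γ₂ - 1) (none : Option A)).get ⟨j, h⟩ = none ∧
              LBAux.padSides σ.length sides j = 0 ∧
              (j + 1 = (σ.map some ++ List.replicate (2 * Multiset.card Γ₂ - 1) (none : Option A)).length ∨
                ¬ WordEnd [σ.map some ++ List.replicate (2 * Multiset.card Γ₂ - 1) (none : Option A)] j)} =
              ↑(Finset.image (fun k => σ.length + (2 * k + 1)) (Finset.range (Multiset.card Γ₂ - 1))) := by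
            ext j
            simp only [Set.mem_setOf_eq, Finset.coe_image, Set.mem_image, Finset.mem_coe,
              Finset.mem_range]
            constructor
            · rintro ⟨h, hg, hs, -⟩
              have hL : j < σ.length + (2 * Multiset.card Γ₂ - 1) := by rw [hlen'] at h; exact h
              have hn : σ.length ≤ j := by
                by_contra hn
                rw [LBAux.get_pad_left σ _ j (lt_of_not_ge hn) h] at hg
                simp at hg
              have hpar : (j - σ.length) % 2 = 1 := by
                rcases Nat.mod_two_eq_zero_or_one (j - σ.length) with hp | hp
                · rw [LBAux.padSides_even sides (by omega) hp] at hs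
                  exact absurd hs (by decide)
                · exact hp
              exact ⟨(j - σ.length - 1) / 2, by omega, by omega⟩
            · rintro ⟨k, hk, rfl⟩
              have h : σ.length + (2 * k + 1)
                  < (σ.map some ++ List.replicate (2 * Multiset.card Γ₂ - 1) (none : Option A)).length := by
                rw [hlen']; omega
              exact ⟨h, LBAux.get_pad_right σ _ _ (by omega) h,
                LBAux.padSides_odd sides (by omega) (by omega), LBAux.cond_triv _ _⟩
          rw [hset, Set.ncard_coe_finset,
            Finset.card_image_of_injective _ (fun a b hab => by omega),
            Finset.card_range]
          show (Γ₁.map some + Multiset.replicate (Multiset.card Γ₂ - 1) (none : Option A)).count none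
              ≤ Multiset.card Γ₂ - 1
          rw [Multiset.count_add, Multiset.count_eq_zero_of_notMem (by simp),
            Multiset.count_replicate, if_pos rfl, zero_add]
        · show (Γ₂.map some).count none ≤ _
          rw [Multiset.count_eq_zero_of_notMem (by simp)]
          exact Nat.zero_le _
        · show (Γ₃.map some).count none ≤ _
          rw [Multiset.count_eq_zero_of_notMem (by simp)]
          exact Nat.zero_le _
        · have hset : {j : ℕ | ∃ h : j < (σ.map some ++ List.replicate (2 * Multiset.card Γ₂ - 1) (none : Option A)).length,
              (σ.map some ++ List.replicate (2 * Multiset.card Γ₂ - 1) (none : Option A)).get ⟨j, h⟩ = none ∧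
              LBAux.padSides σ.length sides j = 3 ∧
              (j + 1 = (σ.map some ++ List.replicate (2 * Multiset.card Γ₂ - 1) (none : Option A)).length ∨
                ¬ WordEnd [σ.map some ++ List.replicate (2 * Multiset.card Γ₂ - 1) (none : Option A)] j)} =
              ↑(Finset.image (fun k => σ.length + 2 * k) (Finset.range (Multiset.card Γ₂))) := by
            ext j
            simp only [Set.mem_setOf_eq, Finset.coe_image, Set.mem_image, Finset.mem_coe,
              Finset.mem_range]
            constructor
            · rintro ⟨h, hg, hs, -⟩
              have hL : j < σ.length + (2 * Multiset.card Γ₂ - 1) := by rw [hlen'] at h; exact h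
              have hn : σ.length ≤ j := by
                by_contra hn
                rw [LBAux.get_pad_left σ _ j (lt_of_not_ge hn) h] at hg
                simp at hg
              have hpar : (j - σ.length) % 2 = 0 := by
                rcases Nat.mod_two_eq_zero_or_one (j - σ.length) with hp | hp
                · exact hp
                · rw [LBAux.padSides_odd sides (by omega) hp] at hs
                  exact absurd hs (by decide)
              exact ⟨(j - σ.length) / 2, by omega, by omega⟩
            · rintro ⟨k, hk, rfl⟩
              have h : σ.length + 2 * k
                  < (σ.map some ++ List.replicate (2 * Multiset.card Γ₂ - 1) (none : Option A)).length := by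
                rw [hlen']; omega
              exact ⟨h, LBAux.get_pad_right σ _ _ (by omega) h,
                LBAux.padSides_even sides (by omega) (by omega), LBAux.cond_triv _ _⟩
          rw [hset, Set.ncard_coe_finset,
            Finset.card_image_of_injective _ (fun a b hab => by omega),
            Finset.card_range]
          show (Multiset.replicate (Multiset.card Γ₂) (none : Option A)).count none ≤ Multiset.card Γ₂
          rw [Multiset.count_replicate, if_pos rfl]
      · -- character `some γ`
        rcases fin4 i with rfl | rfl | rfl | rfl
        · have hc := hcov 0 γ
          rw [LBAux.keyset σ _ sides (LBAux.padSides σ.length sides)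
            (fun j hj => LBAux.padSides_lt sides hj) 0 γ]
          refine le_trans (le_of_eq ?_) hc
          show (Γ₁.map some + Multiset.replicate (Multiset.card Γ₂ - 1) (none : Option A)).count (some γ)
              = Γ₁.count γ
          rw [Multiset.count_add, Multiset.count_map_eq_count' _ _ (Option.some_injective A),
            Multiset.count_replicate, if_neg (by simp), add_zero]
        · have hc := hcov 1 γ
          rw [LBAux.keyset σ _ sides (LBAux.padSides σ.length sides)
            (fun j hj => LBAux.padSides_lt sides hj) 1 γ]
          refine le_trans (le_of_eq ?_) hc
          show (Γ₂.map some).count (some γ) = Γ₂.count γ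
          rw [Multiset.count_map_eq_count' _ _ (Option.some_injective A)]
        · have hc := hcov 2 γ
          rw [LBAux.keyset σ _ sides (LBAux.padSides σ.length sides)
            (fun j hj => LBAux.padSides_lt sides hj) 2 γ]
          refine le_trans (le_of_eq ?_) hc
          show (Γ₃.map some).count (some γ) = Γ₃.count γ
          rw [Multiset.count_map_eq_count' _ _ (Option.some_injective A)]
        · show (Multiset.replicate (Multiset.card Γ₂) (none : Option A)).count (some γ) ≤ _
          rw [Multiset.count_replicate, if_neg (by simp)]
          exact Nat.zero_le _
end
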